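/- Let S^{(0)} ∈ ℂ^{M×M} be a positive semidefinite matrix of rank K. Then the Hadamard product S^{(0)} ⊙ S^{(0)} ⊙ (S^{(0)})* is positive semidefinite and has rank at most K^2(K+1)/2. -/

import Mathlib

/-!
Each column of `A ⊙ B` is the pointwise product of a column of `A` and a column of `B`, so the
column space of `A ⊙ B` lies in the product `V * W` of the column spaces inside the algebra of
functions `m → K`. Products of basis vectors span `V * W`, whence
`rank (A ⊙ B) ≤ rank A * rank B`, and for `A = B` these products commute, so
`rank A * (rank A + 1) / 2` of them suffice.

A Hermitian `S` has `conj S = Sᵀ`, which is positive semidefinite of rank `K`; Schur's product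
theorem gives positivity, and the two bounds give `rank ≤ K (K + 1) / 2 * K`.
-/

open Matrix Module Submodule
open scoped ComplexOrder

namespace Submodule

variable {K A : Type*} [Field K]

theorem eq_span_range_finBasis [AddCommGroup A] [Module K A] (V : Submodule K A)
    [FiniteDimensional K V] : V = span K (Set.range fun i => (finBasis K V i : A)) := by
  rw [Set.range_comp' Subtype.val, ← V.coe_subtype, ← map_span, Basis.span_eq, map_top,
    range_subtype]

theorem span_range_mul_span_range [Semiring A] [Algebra K A] {ι κ : Type*} (f : ι → A)
    (g : κ → A) : span K (Set.range f) * span K (Set.range g) =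
      span K (Set.range fun p : ι × κ => f p.1 * g p.2) := by
  rw [span_mul_span, ← Set.image2_mul, Set.image2_range]

section Ring

variable [Ring A] [Algebra K A]

theorem mul_eq_span_range_finBasis_mul (V W : Submodule K A) [FiniteDimensional K V]
    [FiniteDimensional K W] :
    V * W = span K (Set.range fun p : Fin (finrank K V) × Fin (finrank K W) =>
      (finBasis K V p.1 : A) * finBasis K W p.2) :=
  (congrArg₂ (· * ·) V.eq_span_range_finBasis W.eq_span_range_finBasis).trans
    (span_range_mul_span_range _ _)

theorem finrank_mul_le (V W : Submodule K A) [FiniteDimensional K V] [FiniteDimensional K W] :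
    finrank K ↥(V * W) ≤ finrank K V * finrank K W := by
  rw [mul_eq_span_range_finBasis_mul]
  exact (finrank_range_le_card _).trans_eq (by simp)

end Ring

theorem finrank_mul_self_le [CommRing A] [Algebra K A] (V : Submodule K A)
    [FiniteDimensional K V] :
    finrank K ↥(V * V) ≤ finrank K V * (finrank K V + 1) / 2 := by
  let b (i : Fin (finrank K V)) : A := finBasis K V i
  let f : Sym2 (Fin (finrank K V)) → A :=
    Sym2.lift ⟨fun i j => b i * b j, fun i j => mul_comm _ _⟩
  have hVV : V * V ≤ span K (Set.range f) := by
    rw [mul_eq_span_range_finBasis_mul]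
    exact span_mono (by rintro _ ⟨⟨i, j⟩, rfl⟩; exact ⟨s(i, j), rfl⟩)
  have : FiniteDimensional K (span K (Set.range f)) := .span_of_finite K (Set.finite_range f)
  calc finrank K ↥(V * V) ≤ finrank K (span K (Set.range f)) := finrank_mono hVV
    _ ≤ Fintype.card (Sym2 (Fin (finrank K V))) := finrank_range_le_card f
    _ = finrank K V * (finrank K V + 1) / 2 := by
      rw [Sym2.card, Fintype.card_fin, Nat.choose_two_right, Nat.add_sub_cancel, mul_comm]

end Submodule

namespace Matrix

theorem IsHermitian.map_star_eq_transpose {n α : Type*} [Star α] {A : Matrix n n α}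
    (hA : A.IsHermitian) : A.map star = Aᵀ := by
  ext i j
  exact hA.apply j i

theorem span_range_col_hadamard_le {m n R : Type*} [CommSemiring R] (A B : Matrix m n R) :
    span R (Set.range (A ⊙ B).col) ≤ span R (Set.range A.col) * span R (Set.range B.col) :=
  span_le.2 <| by
    rintro _ ⟨j, rfl⟩
    exact mul_mem_mul (subset_span ⟨j, rfl⟩) (subset_span ⟨j, rfl⟩)

variable {m n K : Type*} [Fintype m] [Fintype n] [Field K]

theorem rank_hadamard_le (A B : Matrix m n K) : (A ⊙ B).rank ≤ A.rank * B.rank := by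
  simp only [rank_eq_finrank_span_cols]
  exact (finrank_mono (span_range_col_hadamard_le A B)).trans (finrank_mul_le _ _)

theorem rank_hadamard_self_le (A : Matrix m n K) :
    (A ⊙ A).rank ≤ A.rank * (A.rank + 1) / 2 := by
  simp only [rank_eq_finrank_span_cols]
  exact (finrank_mono (span_range_col_hadamard_le A A)).trans (finrank_mul_self_le _)

end Matrix

/-- If `S⁽⁰⁾` is positive semidefinite of rank `K`, then the Hadamard product
`S⁽⁰⁾ ⊙ S⁽⁰⁾ ⊙ (S⁽⁰⁾)*` is positive semidefinite of rank at most `K²(K+1)/2`. -/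
theorem hadamard_cube_posSemidef_rank_le (M K : ℕ) (S : Matrix (Fin M) (Fin M) ℂ)
    (hS : S.PosSemidef) (hK : S.rank = K) :
    (Matrix.hadamard (Matrix.hadamard S S) (S.map (starRingEnd ℂ))).PosSemidef ∧
    (Matrix.hadamard (Matrix.hadamard S S) (S.map (starRingEnd ℂ))).rank ≤ K ^ 2 * (K + 1) / 2 := by
  have hconj : S.map (starRingEnd ℂ) = Sᵀ := hS.isHermitian.map_star_eq_transpose
  rw [hconj]
  refine ⟨(hS.hadamard hS).hadamard hS.transpose, ?_⟩
  calc (S ⊙ S ⊙ Sᵀ).rank ≤ (S ⊙ S).rank * Sᵀ.rank := rank_hadamard_le _ _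
    _ ≤ K * (K + 1) / 2 * K := by
      rw [rank_transpose, hK]
      exact Nat.mul_le_mul_right K (hK ▸ rank_hadamard_self_le S)
    _ = K ^ 2 * (K + 1) / 2 := by
      rw [Nat.div_mul_right_comm (Nat.even_mul_succ_self K).two_dvd]
      ring_nf
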